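/- arXiv:2202.06119 — 2 statements merged into one kernel-verified Lean document; each statement's English description precedes it below -/
import Mathlib

section
/- Let $2 < p < \infty$ and $\tfrac{1}{p} + \tfrac{1}{q} = 1$. Define $G : [0,1] \times \mathbb{T} \to \mathbb{C}$ by $G(r,t) = g(t)$, where $g$ is the continuous function on $\mathbb{T}$ with Fourier coefficients $\hat{g}(k) = \frac{e^{i k \log k}}{\sqrt{k}(\log k)^2}$ for $k \ge 2$ and $0$ otherwise. Then $G \in L^p(\mathbb{D})$ but $\|G\|_{p,q} = \infty$, i.e. $G \notin L^p_{\mathrm{rad}}(\ell^q_{\mathrm{ang}})$; hence the inclusion $L^p_{\mathrm{rad}}(\ell^q_{\mathrm{ang}}) \subseteq L^p(\mathbb{D})$ is strict. -/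
/-!
Since `g` is continuous on the compact circle, `G` is bounded, hence in `L^p` of the finite
measure `r dr dt`. The angular coefficients of `G` at every radius are those of `g`, with
`|ĝ(k)| = (√k (log k)²)⁻¹`. As `p > 2` forces `q < 2`, for `q/2 < s < 1` the logarithm is
eventually absorbed by `k^(s - q/2)`, so `|ĝ(k)|^q ≥ k^(-s)` eventually and `∑ |ĝ(k)|^q`
diverges: the inner ℓ^q sum is `∞` for every `r`, and so is the mixed norm.
-/

open MeasureTheory Set Filter
open scoped ENNReal NNReal

lemma pos_and_lt_two_of_one_div_add_one_div {p q : ℝ} (hp : 2 < p) (hpq : 1 / p + 1 / q = 1) :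
    0 < q ∧ q < 2 := by
  have hq : p.HolderConjugate q := Real.holderConjugate_iff.mpr ⟨by linarith, by simpa using hpq⟩
  refine ⟨hq.symm.pos, ?_⟩
  rw [hq.conjugate_eq, div_lt_iff₀ (by linarith)]
  linarith

lemma eventually_sqrt_mul_log_sq_rpow_le {q δ : ℝ} (hδ : 0 < δ) :
    ∀ᶠ n : ℕ in atTop, (Real.sqrt n * Real.log n ^ 2) ^ q ≤ (n : ℝ) ^ (q / 2 + δ) := by
  have hlog := ((isLittleO_log_rpow_rpow_atTop (2 * q) hδ).bound one_pos).natCast_atTop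
  filter_upwards [hlog, eventually_ge_atTop 1] with n hn h1
  have hlog0 : 0 ≤ Real.log n := Real.log_nonneg (by exact_mod_cast h1)
  rw [one_mul, Real.norm_of_nonneg (by positivity), Real.norm_of_nonneg (by positivity)] at hn
  calc (Real.sqrt n * Real.log n ^ 2) ^ q = (n : ℝ) ^ (q / 2) * Real.log n ^ (2 * q) := by
        rw [Real.mul_rpow (by positivity) (by positivity), Real.sqrt_eq_rpow,
          ← Real.rpow_mul (by positivity), ← Real.rpow_natCast, ← Real.rpow_mul hlog0]
        ring_nf
    _ ≤ (n : ℝ) ^ (q / 2) * (n : ℝ) ^ δ := by gcongr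
    _ = (n : ℝ) ^ (q / 2 + δ) := (Real.rpow_add (by positivity) _ _).symm

lemma not_summable_inv_sqrt_mul_log_sq_rpow {q : ℝ} (hq : q < 2) :
    ¬ Summable fun n : ℕ => (Real.sqrt n * Real.log n ^ 2)⁻¹ ^ q := by
  intro hsum
  have hδ : 0 < (1 - q / 2) / 2 := by linarith
  have hpow : Summable fun n : ℕ => (n : ℝ) ^ (-(q / 2 + (1 - q / 2) / 2)) := by
    refine hsum.of_norm_bounded_eventually_nat ?_
    filter_upwards [eventually_sqrt_mul_log_sq_rpow_le (q := q) hδ, eventually_ge_atTop 2]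
      with n hn h2
    have hn2 : (2 : ℝ) ≤ n := by exact_mod_cast h2
    have hu : 0 < Real.sqrt n * Real.log n ^ 2 := by
      have := Real.log_pos (by linarith : (1 : ℝ) < n)
      positivity
    rw [Real.norm_of_nonneg (by positivity), Real.rpow_neg (by positivity),
      Real.inv_rpow hu.le]
    exact inv_anti₀ (by positivity) hn
  have := Real.summable_nat_rpow.mp hpow
  linarith

lemma tsum_int_nnnorm_rpow_eq_top {E : Type*} [SeminormedAddGroup E] {a : ℤ → E} {q : ℝ}
    (hq : 0 ≤ q) (ha : ¬ Summable fun n : ℕ => ‖a n‖ ^ q) :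
    ∑' m : ℤ, (‖a m‖₊ : ℝ≥0∞) ^ q = ∞ := by
  refine top_unique (le_trans ?_ (ENNReal.tsum_comp_le_tsum_of_injective Nat.cast_injective
    fun m : ℤ => (‖a m‖₊ : ℝ≥0∞) ^ q))
  simp only [← ENNReal.coe_rpow_of_nonneg _ hq, top_le_iff,
    ENNReal.tsum_coe_eq_top_iff_not_summable_coe, NNReal.coe_rpow, coe_nnnorm]
  exact ha

/-- For `n < 2` both sides vanish: the right-hand side through `√0 = 0`, `log 1 = 0` and
`0⁻¹ = 0`. -/
lemma norm_fourierCoeff_natCast {g : AddCircle (1 : ℝ) → ℂ}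
    (hcoef : ∀ k : ℤ, fourierCoeff g k =
      if 2 ≤ k then
        Complex.exp (Complex.I * (k : ℂ) * (Real.log (k : ℝ) : ℂ)) /
          ((Real.sqrt (k : ℝ) * (Real.log (k : ℝ)) ^ 2 : ℝ) : ℂ)
      else 0) (n : ℕ) :
    ‖fourierCoeff g n‖ = (Real.sqrt n * Real.log n ^ 2)⁻¹ := by
  rw [hcoef]
  split_ifs with hn
  · rw [norm_div, mul_assoc, ← Complex.ofReal_intCast, ← Complex.ofReal_mul,
      Complex.norm_exp_I_mul_ofReal, Complex.norm_real, Real.norm_of_nonneg (by positivity),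
      one_div, Int.cast_natCast]
  · obtain rfl | rfl : n = 0 ∨ n = 1 := by omega
    all_goals simp

/-- With `2 < p < ∞`, `1/p + 1/q = 1`, and `g` the continuous function with Fourier
coefficients `e^{ik log k}/(√k (log k)²)` for `k ≥ 2` (and `0` otherwise), the function
`G(r,t) = g(t)` on the disc lies in `L^p(𝔻)` but has infinite mixed norm `‖G‖_{p,q}`,
so `G ∉ L^p_rad(ℓ^q_ang)` and the inclusion `L^p_rad(ℓ^q_ang) ⊆ L^p(𝔻)` is strict. -/
theorem radial_extension_in_Lp_not_mixed (p q : ℝ) (hp : 2 < p) (hpq : 1 / p + 1 / q = 1)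
    (g : AddCircle (1 : ℝ) → ℂ) (hg : Continuous g)
    (hcoef : ∀ k : ℤ, fourierCoeff g k =
      if 2 ≤ k then
        Complex.exp (Complex.I * (k : ℂ) * (Real.log (k : ℝ) : ℂ)) /
          ((Real.sqrt (k : ℝ) * (Real.log (k : ℝ)) ^ 2 : ℝ) : ℂ)
      else 0) :
    MemLp (fun x : ℝ × AddCircle (1 : ℝ) => g x.2) (ENNReal.ofReal p)
        (((volume.restrict (Ioc (0 : ℝ) 1)).withDensity
            (fun r => ENNReal.ofReal r)).prod AddCircle.haarAddCircle) ∧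
      (∫⁻ r in Ioc (0 : ℝ) 1,
        (∑' m : ℤ, (‖fourierCoeff (fun θ : AddCircle (1 : ℝ) =>
            (fun x : ℝ × AddCircle (1 : ℝ) => g x.2) (r, θ)) m‖₊ : ℝ≥0∞) ^ q) ^ (p / q) *
          ENNReal.ofReal r) = ∞ := by
  obtain ⟨hq, hq2⟩ := pos_and_lt_two_of_one_div_add_one_div hp hpq
  have : IsFiniteMeasure ((volume.restrict (Ioc (0 : ℝ) 1)).withDensity (ENNReal.ofReal ·)) :=
    isFiniteMeasure_withDensity_ofReal continuous_id.integrableOn_Ioc.hasFiniteIntegral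
  refine ⟨(hg.memLp_of_hasCompactSupport (.of_compactSpace g)).comp_snd _, ?_⟩
  have hsum : ∑' m : ℤ, (‖fourierCoeff g m‖₊ : ℝ≥0∞) ^ q = ∞ :=
    tsum_int_nnnorm_rpow_eq_top hq.le <| by
      simpa only [norm_fourierCoeff_natCast hcoef] using not_summable_inv_sqrt_mul_log_sq_rpow hq2
  calc _ = ∫⁻ _ in Ioc (0 : ℝ) 1, ∞ := setLIntegral_congr_fun measurableSet_Ioc fun r hr => by
        rw [hsum, ENNReal.top_rpow_of_pos (div_pos (by linarith) hq),
          ENNReal.top_mul (ENNReal.ofReal_pos.mpr hr.1).ne']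
    _ = ∞ := by simp
end

section
/- Let $\tfrac{4}{3} < p < 4$. The operator $Sf(x) = \int_0^1 \frac{f(t)}{2 - x - t}\, dt$ is bounded on the weighted space $L^p([0,1], x^{1-p/2}\,dx)$: there is a constant $C_p$ such that $\int_0^1 |Sf(x)|^p\, x^{1-p/2}\,dx \le C_p^p \int_0^1 |f(x)|^p\, x^{1-p/2}\,dx$ for all measurable $f : [0,1] \to \mathbb{C}$ with finite right-hand side. -/
open MeasureTheory Set
open scoped ENNReal NNReal

/-! Schur test with the test function `h x = (1 - x) ^ (-γ) * x ^ (-δ)`. In `u = 1 - x`,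
`v = 1 - t` the kernel is Hilbert's kernel `1 / (u + v)`, homogeneous of degree `-1`, so
`∫ (u + v)⁻¹ v ^ a dv ≲ u ^ a` for `-1 < a < 0`; away from the corner `(1, 1)` the kernel is
bounded and only the integrability of the power of `t` matters. Both Schur conditions therefore
reduce to one kernel estimate, with exponents in the admissible range exactly when the weight
exponent `α = 1 - p / 2` satisfies `-1 < α < p - 1`, i.e. `4 / 3 < p < 4`. -/

section Schur

variable {X : Type*} [MeasurableSpace X] {μ : Measure X} {p q : ℝ}

theorem rpow_lintegral_mul_le_of_holderConjugate (hpq : p.HolderConjugate q)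
    {g k h : X → ℝ≥0∞} (hg : Measurable g) (hk : Measurable k) (hh : Measurable h)
    (hpos : ∀ᵐ t ∂μ, h t ≠ 0 ∧ h t ≠ ∞) :
    (∫⁻ t, g t * k t ∂μ) ^ p ≤
      (∫⁻ t, k t * h t ^ q ∂μ) ^ (p - 1) * ∫⁻ t, g t ^ p * (h t)⁻¹ ^ p * k t ∂μ := by
  have hp0 : 0 < p := hpq.pos
  have hq0 : 0 < q := hpq.symm.pos
  have hsplit : ∀ᵐ t ∂μ,
      g t * k t = (g t * k t ^ (1 / p) * (h t)⁻¹) * (k t ^ (1 / q) * h t) := by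
    filter_upwards [hpos] with t ⟨h0, htop⟩
    calc g t * k t = g t * (k t ^ (1 / p) * k t ^ (1 / q)) * ((h t)⁻¹ * h t) := by
          rw [← ENNReal.rpow_add_of_nonneg _ _ hpq.one_div_nonneg hpq.symm.one_div_nonneg,
            one_div, one_div, hpq.inv_add_inv_eq_one, ENNReal.rpow_one,
            ENNReal.inv_mul_cancel h0 htop, mul_one]
      _ = _ := by ring
  have hI : ∫⁻ t, (g t * k t ^ (1 / p) * (h t)⁻¹) ^ p ∂μ =
      ∫⁻ t, g t ^ p * (h t)⁻¹ ^ p * k t ∂μ := by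
    congr 1; ext t
    rw [ENNReal.mul_rpow_of_nonneg _ _ hp0.le, ENNReal.mul_rpow_of_nonneg _ _ hp0.le,
      ← ENNReal.rpow_mul, one_div_mul_cancel hp0.ne', ENNReal.rpow_one]
    ring
  have hJ : ∫⁻ t, (k t ^ (1 / q) * h t) ^ q ∂μ = ∫⁻ t, k t * h t ^ q ∂μ := by
    congr 1; ext t
    rw [ENNReal.mul_rpow_of_nonneg _ _ hq0.le, ← ENNReal.rpow_mul, one_div_mul_cancel hq0.ne',
      ENNReal.rpow_one]
  have hexp : 1 / q * p = p - 1 := by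
    rw [one_div, show q⁻¹ = 1 - p⁻¹ by linarith [hpq.inv_add_inv_eq_one]]
    field_simp
  calc (∫⁻ t, g t * k t ∂μ) ^ p
      ≤ ((∫⁻ t, g t ^ p * (h t)⁻¹ ^ p * k t ∂μ) ^ (1 / p) *
          (∫⁻ t, k t * h t ^ q ∂μ) ^ (1 / q)) ^ p := by
        rw [lintegral_congr_ae hsplit, ← hI, ← hJ]
        gcongr
        exact ENNReal.lintegral_mul_le_Lp_mul_Lq μ hpq (by fun_prop) (by fun_prop)
    _ = _ := by
        rw [ENNReal.mul_rpow_of_nonneg _ _ hp0.le, ← ENNReal.rpow_mul, ← ENNReal.rpow_mul,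
          one_div_mul_cancel hp0.ne', ENNReal.rpow_one, hexp, mul_comm]

lemma lintegral_mul_lintegral_mul_swap [SFinite μ] {F G : X → ℝ≥0∞} {k : X → X → ℝ≥0∞}
    (hF : Measurable F) (hG : Measurable G) (hk : Measurable (Function.uncurry k)) :
    ∫⁻ x, F x * ∫⁻ t, G t * k x t ∂μ ∂μ = ∫⁻ t, G t * ∫⁻ x, k x t * F x ∂μ ∂μ := by
  have hGk : Measurable (Function.uncurry fun x t => G t * k x t) :=
    (hG.comp measurable_snd).mul hk
  calc ∫⁻ x, F x * ∫⁻ t, G t * k x t ∂μ ∂μ = ∫⁻ x, ∫⁻ t, F x * (G t * k x t) ∂μ ∂μ := by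
        congr 1; ext x; rw [lintegral_const_mul _ (by fun_prop)]
    _ = ∫⁻ t, ∫⁻ x, F x * (G t * k x t) ∂μ ∂μ :=
        lintegral_lintegral_swap ((hF.comp measurable_fst).mul hGk).aemeasurable
    _ = ∫⁻ t, G t * ∫⁻ x, k x t * F x ∂μ ∂μ := by
        congr 1; ext t
        rw [← lintegral_const_mul _ (by fun_prop)]
        congr 1; ext x; ring

theorem lintegral_rpow_lintegral_mul_le_of_schur [SFinite μ] (hpq : p.HolderConjugate q)
    {k : X → X → ℝ≥0∞} (hk : Measurable (Function.uncurry k)) {w h g : X → ℝ≥0∞}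
    (hw : Measurable w) (hh : Measurable h) (hg : Measurable g) {A B : ℝ≥0∞}
    (hpos : ∀ᵐ x ∂μ, h x ≠ 0 ∧ h x ≠ ∞)
    (hA : ∀ᵐ x ∂μ, ∫⁻ t, k x t * h t ^ q ∂μ ≤ A * h x ^ q)
    (hB : ∀ᵐ t ∂μ, ∫⁻ x, k x t * (h x ^ p * w x) ∂μ ≤ B * (h t ^ p * w t)) :
    ∫⁻ x, (∫⁻ t, g t * k x t ∂μ) ^ p * w x ∂μ ≤ A ^ (p - 1) * B * ∫⁻ t, g t ^ p * w t ∂μ := by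
  have hp1 : 0 ≤ p - 1 := by linarith [hpq.lt]
  set G : X → ℝ≥0∞ := fun t => g t ^ p * (h t)⁻¹ ^ p
  have hGk : Measurable (Function.uncurry fun x t => G t * k x t) :=
    ((by fun_prop : Measurable G).comp measurable_snd).mul hk
  have hpointwise : ∀ᵐ x ∂μ, (∫⁻ t, g t * k x t ∂μ) ^ p * w x ≤
      A ^ (p - 1) * (h x ^ p * w x * ∫⁻ t, G t * k x t ∂μ) := by
    filter_upwards [hA] with x hAx
    calc (∫⁻ t, g t * k x t ∂μ) ^ p * w x
        ≤ (A * h x ^ q) ^ (p - 1) * (∫⁻ t, G t * k x t ∂μ) * w x := by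
          gcongr
          exact (rpow_lintegral_mul_le_of_holderConjugate hpq (k := k x) hg
            (hk.comp measurable_prodMk_left) hh hpos).trans (by gcongr)
      _ = A ^ (p - 1) * (h x ^ p * w x * ∫⁻ t, G t * k x t ∂μ) := by
        rw [ENNReal.mul_rpow_of_nonneg _ _ hp1, ← ENNReal.rpow_mul, mul_comm q,
          hpq.sub_one_mul_conj]
        ring
  have htest : ∀ᵐ t ∂μ, G t * ∫⁻ x, k x t * (h x ^ p * w x) ∂μ ≤ B * (g t ^ p * w t) := by
    filter_upwards [hB, hpos] with t hBt ⟨h0, htop⟩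
    calc G t * ∫⁻ x, k x t * (h x ^ p * w x) ∂μ ≤ G t * (B * (h t ^ p * w t)) := by gcongr
      _ = B * (g t ^ p * w t) * ((h t)⁻¹ * h t) ^ p := by
        rw [ENNReal.mul_rpow_of_nonneg _ _ hpq.pos.le]; ring
      _ = B * (g t ^ p * w t) := by
        rw [ENNReal.inv_mul_cancel h0 htop, ENNReal.one_rpow, mul_one]
  calc ∫⁻ x, (∫⁻ t, g t * k x t ∂μ) ^ p * w x ∂μ
      ≤ ∫⁻ x, A ^ (p - 1) * (h x ^ p * w x * ∫⁻ t, G t * k x t ∂μ) ∂μ :=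
        lintegral_mono_ae hpointwise
    _ = A ^ (p - 1) * ∫⁻ t, G t * ∫⁻ x, k x t * (h x ^ p * w x) ∂μ ∂μ := by
        rw [lintegral_const_mul _ (by have := hGk.lintegral_prod_right (ν := μ); fun_prop),
          lintegral_mul_lintegral_mul_swap (by fun_prop) (by fun_prop) hk]
    _ ≤ A ^ (p - 1) * ∫⁻ t, B * (g t ^ p * w t) ∂μ :=
        mul_le_mul_right (lintegral_mono_ae htest) _
    _ = A ^ (p - 1) * B * ∫⁻ t, g t ^ p * w t ∂μ := by
        rw [lintegral_const_mul _ (by fun_prop), mul_assoc]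

end Schur

lemma lintegral_Ioc_zero_rpow {a e : ℝ} (ha : 0 ≤ a) (he : -1 < e) :
    ∫⁻ t in Ioc 0 a, ENNReal.ofReal (t ^ e) = ENNReal.ofReal (a ^ (e + 1) / (e + 1)) := by
  have hint : IntegrableOn (fun t : ℝ => t ^ e) (Ioc 0 a) :=
    (intervalIntegrable_iff_integrableOn_Ioc_of_le ha).1
      (intervalIntegral.intervalIntegrable_rpow' he)
  rw [← ofReal_integral_eq_lintegral_ofReal hint
      (ae_restrict_of_forall_mem measurableSet_Ioc fun t ht => Real.rpow_nonneg ht.1.le e),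
    ← intervalIntegral.integral_of_le ha, integral_rpow (Or.inl he),
    Real.zero_rpow (by linarith), sub_zero]

lemma lintegral_Ioi_rpow {c e : ℝ} (hc : 0 < c) (he : e < -1) :
    ∫⁻ t in Ioi c, ENNReal.ofReal (t ^ e) = ENNReal.ofReal (-c ^ (e + 1) / (e + 1)) := by
  rw [← ofReal_integral_eq_lintegral_ofReal (integrableOn_Ioi_rpow_of_lt he hc)
      (ae_restrict_of_forall_mem measurableSet_Ioi fun t ht => Real.rpow_nonneg (hc.trans ht).le e),
    integral_Ioi_rpow_of_lt he hc]

lemma lintegral_Ioi_inv_add_mul_rpow_le {u a : ℝ} (hu : 0 < u) (ha1 : -1 < a) (ha0 : a < 0) :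
    ∫⁻ v in Ioi 0, ENNReal.ofReal ((u + v)⁻¹ * v ^ a) ≤
      ENNReal.ofReal ((1 / (a + 1) - 1 / a) * u ^ a) := by
  have hua : 0 ≤ u ^ a := Real.rpow_nonneg hu.le a
  rw [← Ioc_union_Ioi_eq_Ioi hu.le, lintegral_union measurableSet_Ioi Ioc_disjoint_Ioi_same]
  calc _ ≤ (∫⁻ v in Ioc 0 u, ENNReal.ofReal u⁻¹ * ENNReal.ofReal (v ^ a)) +
        ∫⁻ v in Ioi u, ENNReal.ofReal (v ^ (a - 1)) := by
        gcongr ?_ + ?_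
        · refine setLIntegral_mono (by fun_prop) fun v hv => ?_
          rw [← ENNReal.ofReal_mul (by positivity)]
          gcongr
          · exact Real.rpow_nonneg hv.1.le a
          · linarith [hv.1]
        · refine setLIntegral_mono (by fun_prop) fun v hv => ?_
          have hv0 : 0 < v := hu.trans hv
          rw [Real.rpow_sub hv0, Real.rpow_one, div_eq_inv_mul]
          gcongr
          linarith
    _ = ENNReal.ofReal (u ^ a / (a + 1)) + ENNReal.ofReal (u ^ a / -a) := by
        rw [lintegral_const_mul _ (by fun_prop), lintegral_Ioc_zero_rpow hu.le ha1,
          lintegral_Ioi_rpow hu (by linarith), ← ENNReal.ofReal_mul (by positivity),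
          Real.rpow_add hu, Real.rpow_one, sub_add_cancel, neg_div, ← div_neg]
        congr 2
        field_simp
    _ = ENNReal.ofReal ((1 / (a + 1) - 1 / a) * u ^ a) := by
        have : 0 < a + 1 := by linarith
        rw [← ENNReal.ofReal_add (by positivity) (div_nonneg hua (by linarith))]
        congr 1
        field_simp
        ring

lemma lintegral_Iio_one_inv_two_sub_mul_rpow_le {x a : ℝ} (hx : x < 1) (ha1 : -1 < a)
    (ha0 : a < 0) :
    ∫⁻ t in Iio 1, ENNReal.ofReal ((2 - x - t)⁻¹ * (1 - t) ^ a) ≤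
      ENNReal.ofReal ((1 / (a + 1) - 1 / a) * (1 - x) ^ a) := by
  have hpre : Iio (1 : ℝ) = (fun t => 1 - t) ⁻¹' Ioi 0 := by ext; simp
  have hsub := (Measure.measurePreserving_sub_left volume (1 : ℝ)).setLIntegral_comp_preimage_emb
    (MeasurableEquiv.subLeft 1).measurableEmbedding
    (fun v => ENNReal.ofReal ((1 - x + v)⁻¹ * v ^ a)) (Ioi 0)
  simp_rw [show ∀ t : ℝ, 2 - x - t = 1 - x + (1 - t) by intro t; ring, hpre, hsub]
  exact lintegral_Ioi_inv_add_mul_rpow_le (by linarith) ha1 ha0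

lemma rpow_le_two_of_half_le {s r : ℝ} (hs : 1 / 2 ≤ s) (hr1 : -1 ≤ r) (hr0 : r ≤ 0) :
    s ^ r ≤ 2 :=
  calc s ^ r ≤ (1 / 2) ^ r := Real.rpow_le_rpow_of_nonpos (by norm_num) hs hr0
    _ = 2 ^ (-r) := by rw [one_div, Real.inv_rpow (by norm_num), Real.rpow_neg (by norm_num)]
    _ ≤ 2 ^ (1 : ℝ) := Real.rpow_le_rpow_of_exponent_le (by norm_num) (by linarith)
    _ = 2 := Real.rpow_one 2

lemma inv_two_sub_mul_rpow_mul_rpow_le {x t a e : ℝ} (hx : x < 1) (ht0 : 0 < t) (ht1 : t ≤ 1)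
    (ha1 : -1 ≤ a) (ha0 : a ≤ 0) (he1 : -1 ≤ e) (he0 : e ≤ 0) :
    (2 - x - t)⁻¹ * ((1 - t) ^ a * t ^ e) ≤ 4 * t ^ e + 2 * ((2 - x - t)⁻¹ * (1 - t) ^ a) := by
  have hte : 0 ≤ t ^ e := Real.rpow_nonneg ht0.le e
  have hta : 0 ≤ (1 - t) ^ a := Real.rpow_nonneg (by linarith) a
  have hk : 0 ≤ (2 - x - t)⁻¹ := inv_nonneg.2 (by linarith)
  rcases le_or_gt t (1 / 2) with ht | ht
  · have hk2 : (2 - x - t)⁻¹ ≤ 2 := inv_le_of_inv_le₀ (by norm_num) (by linarith)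
    have hta2 := rpow_le_two_of_half_le (s := 1 - t) (by linarith) ha1 ha0
    nlinarith [mul_le_mul hk2 (mul_le_mul_of_nonneg_right hta2 hte) (by positivity) zero_le_two,
      mul_nonneg hk hta]
  · have hte2 := rpow_le_two_of_half_le ht.le he1 he0
    nlinarith [mul_le_mul_of_nonneg_left hte2 (mul_nonneg hk hta)]

theorem exists_lintegral_inv_two_sub_mul_le {a e : ℝ} (ha1 : -1 < a) (ha0 : a < 0)
    (he1 : -1 < e) (he0 : e ≤ 0) :
    ∃ K > 0, ∀ x ∈ Ioo (0 : ℝ) 1,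
      ∫⁻ t in Ioc 0 1, ENNReal.ofReal (2 - x - t)⁻¹ * ENNReal.ofReal ((1 - t) ^ a * t ^ e) ≤
        ENNReal.ofReal K * ENNReal.ofReal ((1 - x) ^ a * x ^ e) := by
  have hA : 0 < 1 / (a + 1) - 1 / a := by
    have : 0 < 1 / (a + 1) := one_div_pos.2 (by linarith)
    have : 1 / a < 0 := one_div_neg.2 ha0
    linarith
  have hE : 0 < 4 / (e + 1) := div_pos (by norm_num) (by linarith)
  refine ⟨4 / (e + 1) + 2 * (1 / (a + 1) - 1 / a), by positivity, fun x ⟨hx0, hx1⟩ => ?_⟩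
  have hax : 1 ≤ (1 - x) ^ a :=
    Real.one_le_rpow_of_pos_of_le_one_of_nonpos (by linarith) (by linarith) ha0.le
  have hex : 1 ≤ x ^ e := Real.one_le_rpow_of_pos_of_le_one_of_nonpos hx0 hx1.le he0
  calc _ ≤ ∫⁻ t in Ioc 0 1, (ENNReal.ofReal 4 * ENNReal.ofReal (t ^ e) +
          ENNReal.ofReal 2 * ENNReal.ofReal ((2 - x - t)⁻¹ * (1 - t) ^ a)) := by
        refine setLIntegral_mono (by fun_prop) fun t ⟨ht0, ht1⟩ => ?_
        have : 0 ≤ (2 - x - t)⁻¹ := inv_nonneg.2 (by linarith)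
        rw [← ENNReal.ofReal_mul this, ← ENNReal.ofReal_mul zero_le_four,
          ← ENNReal.ofReal_mul zero_le_two, ← ENNReal.ofReal_add (by positivity) (by positivity)]
        exact ENNReal.ofReal_le_ofReal (inv_two_sub_mul_rpow_mul_rpow_le hx1 ht0 ht1 ha1.le
          ha0.le he1.le he0)
    _ = ENNReal.ofReal 4 * (∫⁻ t in Ioc 0 1, ENNReal.ofReal (t ^ e)) +
          ENNReal.ofReal 2 * ∫⁻ t in Ioc 0 1, ENNReal.ofReal ((2 - x - t)⁻¹ * (1 - t) ^ a) := by
        rw [lintegral_add_left (by fun_prop), lintegral_const_mul _ (by fun_prop),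
          lintegral_const_mul _ (by fun_prop)]
    _ ≤ ENNReal.ofReal 4 * ENNReal.ofReal (1 / (e + 1)) +
          ENNReal.ofReal 2 * ENNReal.ofReal ((1 / (a + 1) - 1 / a) * (1 - x) ^ a) := by
        gcongr
        · rw [lintegral_Ioc_zero_rpow zero_le_one he1, Real.one_rpow]
        · calc _ = ∫⁻ t in Ioo 0 1, ENNReal.ofReal ((2 - x - t)⁻¹ * (1 - t) ^ a) :=
                (setLIntegral_congr Ioo_ae_eq_Ioc).symm
            _ ≤ ∫⁻ t in Iio 1, ENNReal.ofReal ((2 - x - t)⁻¹ * (1 - t) ^ a) :=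
                lintegral_mono_set Ioo_subset_Iio_self
            _ ≤ _ := lintegral_Iio_one_inv_two_sub_mul_rpow_le hx1 ha1 ha0
    _ ≤ _ := by
        simp only [← ENNReal.ofReal_mul zero_le_four, ← ENNReal.ofReal_mul zero_le_two]
        rw [mul_one_div, ← ENNReal.ofReal_add hE.le
            (mul_nonneg zero_le_two (mul_nonneg hA.le (by linarith))),
          ← ENNReal.ofReal_mul (by positivity)]
        refine ENNReal.ofReal_le_ofReal ?_
        have : (1 - x) ^ a ≤ (1 - x) ^ a * x ^ e := le_mul_of_one_le_right (by linarith) hex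
        linarith [mul_le_mul_of_nonneg_left this hA.le,
          mul_le_mul_of_nonneg_left (hax.trans this) hE.le]

lemma ofReal_mul_rpow_rpow {a b c d r : ℝ} (ha : 0 ≤ a) (hb : 0 ≤ b) (hr : 0 ≤ r) :
    ENNReal.ofReal (a ^ c * b ^ d) ^ r = ENNReal.ofReal (a ^ (c * r) * b ^ (d * r)) := by
  rw [ENNReal.ofReal_rpow_of_nonneg (by positivity) hr,
    Real.mul_rpow (by positivity) (by positivity), ← Real.rpow_mul ha, ← Real.rpow_mul hb]

lemma ofReal_mul_rpow_rpow_mul_ofReal_rpow {a b c d r s : ℝ} (ha : 0 ≤ a) (hb : 0 < b)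
    (hr : 0 ≤ r) :
    ENNReal.ofReal (a ^ c * b ^ d) ^ r * ENNReal.ofReal (b ^ s) =
      ENNReal.ofReal (a ^ (c * r) * b ^ (d * r + s)) := by
  rw [ofReal_mul_rpow_rpow ha hb.le hr, ← ENNReal.ofReal_mul (by positivity), mul_assoc,
    ← Real.rpow_add hb]

lemma ae_restrict_Ioc_mem_Ioo (a b : ℝ) : ∀ᵐ x ∂volume.restrict (Ioc a b), x ∈ Ioo a b := by
  rw [← Measure.restrict_congr_set Ioo_ae_eq_Ioc]
  exact ae_restrict_mem measurableSet_Ioo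

theorem exists_ae_lintegral_inv_two_sub_mul_rpow_le {γ δ r s : ℝ} (hr : 0 ≤ r)
    (ha1 : -1 < -γ * r) (ha0 : -γ * r < 0) (he1 : -1 < -δ * r + s) (he0 : -δ * r + s ≤ 0) :
    ∃ K > 0, ∀ᵐ x ∂volume.restrict (Ioc (0 : ℝ) 1),
      ∫⁻ t in Ioc 0 1, ENNReal.ofReal (2 - x - t)⁻¹ *
          (ENNReal.ofReal ((1 - t) ^ (-γ) * t ^ (-δ)) ^ r * ENNReal.ofReal (t ^ s)) ≤
        ENNReal.ofReal K *
          (ENNReal.ofReal ((1 - x) ^ (-γ) * x ^ (-δ)) ^ r * ENNReal.ofReal (x ^ s)) := by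
  obtain ⟨K, hK, hbound⟩ := exists_lintegral_inv_two_sub_mul_le ha1 ha0 he1 he0
  refine ⟨K, hK, ?_⟩
  filter_upwards [ae_restrict_Ioc_mem_Ioo 0 1] with x hx
  rw [ofReal_mul_rpow_rpow_mul_ofReal_rpow (by linarith [hx.2]) hx.1 hr]
  refine le_trans (le_of_eq (setLIntegral_congr_fun measurableSet_Ioc fun t ht => ?_))
    (hbound x hx)
  rw [ofReal_mul_rpow_rpow_mul_ofReal_rpow (by linarith [ht.2]) ht.1 hr]

theorem exists_lintegral_inv_two_sub_rpow_le {p α : ℝ} (hp : 1 < p) (hα1 : -1 < α)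
    (hαp : α < p - 1) :
    ∃ C > 0, ∀ g : ℝ → ℝ≥0∞, Measurable g →
      ∫⁻ x in Ioc 0 1, (∫⁻ t in Ioc 0 1, g t * ENNReal.ofReal (2 - x - t)⁻¹) ^ p *
          ENNReal.ofReal (x ^ α) ≤
        ENNReal.ofReal C * ∫⁻ x in Ioc 0 1, g x ^ p * ENNReal.ofReal (x ^ α) := by
  obtain ⟨q, hpq⟩ : ∃ q, p.HolderConjugate q := ⟨_, .conjExponent hp⟩
  have hq : 0 < q := hpq.symm.pos
  -- `γ` puts `γ * q` and `γ * p` in `(0, 1)`; `δ` puts `δ * q` in `[0, 1)` and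
  -- `α - δ * p = min α 0` in `(-1, 0]`.
  set γ := 1 / (p + q)
  set δ := max α 0 / p
  have hγ : 0 < γ := by positivity
  have hδ : 0 ≤ δ := by positivity
  have hγq : γ * q < 1 := by
    rw [one_div_mul_eq_div, div_lt_one (by linarith)]; linarith
  have hγp : γ * p < 1 := by
    rw [one_div_mul_eq_div, div_lt_one (by linarith)]; linarith
  have hδq : δ * q < 1 := by
    rw [div_mul_eq_mul_div, div_lt_one (by linarith), ← hpq.sub_one_mul_conj]
    exact mul_lt_mul_of_pos_right (max_lt hαp (by linarith)) hq
  have hδp : -δ * p + α = min α 0 := by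
    rw [neg_mul, div_mul_cancel₀ _ (by linarith), max_def, min_def]
    split_ifs <;> linarith
  obtain ⟨K₁, hK₁, hA⟩ := exists_ae_lintegral_inv_two_sub_mul_rpow_le (γ := γ) (δ := δ)
    (s := 0) hq.le (by linarith) (by nlinarith) (by linarith) (by nlinarith)
  obtain ⟨K₂, hK₂, hB⟩ := exists_ae_lintegral_inv_two_sub_mul_rpow_le (γ := γ) (δ := δ)
    (s := α) (r := p) (by linarith) (by linarith) (by nlinarith)
    (by rw [hδp]; exact lt_min hα1 (by norm_num)) (by rw [hδp]; exact min_le_right α 0)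
  refine ⟨K₁ ^ (p - 1) * K₂, by positivity, fun g hg => ?_⟩
  rw [ENNReal.ofReal_mul (by positivity), ← ENNReal.ofReal_rpow_of_pos hK₁]
  refine lintegral_rpow_lintegral_mul_le_of_schur hpq
    (k := fun x t => ENNReal.ofReal (2 - x - t)⁻¹)
    (h := fun x => ENNReal.ofReal ((1 - x) ^ (-γ) * x ^ (-δ)))
    (by fun_prop) (by fun_prop) (by fun_prop) hg ?_ ?_ ?_
  · filter_upwards [ae_restrict_Ioc_mem_Ioo 0 1] with x ⟨hx0, hx1⟩
    have := Real.rpow_pos_of_pos (sub_pos.2 hx1) (-γ)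
    have := Real.rpow_pos_of_pos hx0 (-δ)
    exact ⟨(ENNReal.ofReal_pos.2 (by positivity)).ne', ENNReal.ofReal_ne_top⟩
  · simpa only [Real.rpow_zero, ENNReal.ofReal_one, mul_one] using hA
  · simpa only [sub_right_comm _ _ (_ : ℝ)] using hB

lemma enorm_setIntegral_div_two_sub_le (f : ℝ → ℂ) {x : ℝ} (hx : x ≤ 1) :
    ‖∫ t in Ioc 0 1, f t / (2 - x - t)‖ₑ ≤
      ∫⁻ t in Ioc 0 1, ‖f t‖ₑ * ENNReal.ofReal (2 - x - t)⁻¹ := by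
  refine (enorm_integral_le_lintegral_enorm _).trans_eq
    (setLIntegral_congr_fun measurableSet_Ioc fun t ht => ?_)
  have hcast : (2 : ℂ) - x - t = ((2 - x - t : ℝ) : ℂ) := by push_cast; ring
  rw [hcast, ← ofReal_norm, norm_div, Complex.norm_real, Real.norm_of_nonneg (by linarith [ht.2]),
    div_eq_mul_inv, ENNReal.ofReal_mul (norm_nonneg _), ofReal_norm]

/-- For `4/3 < p < 4`, the operator `Sf(x) = ∫₀¹ f(t)/(2-x-t) dt` is bounded on the
weighted space `L^p([0,1], x^{1-p/2} dx)`. -/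
theorem reflected_operator_weighted_bound (p : ℝ) (hp1 : 4 / 3 < p) (hp2 : p < 4) :
    ∃ C : ℝ, 0 < C ∧ ∀ f : ℝ → ℂ, Measurable f →
      (∫⁻ x in Ioc (0 : ℝ) 1,
          (‖f x‖₊ : ℝ≥0∞) ^ p * ENNReal.ofReal (x ^ (1 - p / 2))) < ⊤ →
      (∫⁻ x in Ioc (0 : ℝ) 1,
          (‖∫ t in Ioc (0 : ℝ) 1, f t / ((2 : ℂ) - (x : ℂ) - (t : ℂ))‖₊ : ℝ≥0∞) ^ p *
            ENNReal.ofReal (x ^ (1 - p / 2))) ≤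
        ENNReal.ofReal (C ^ p) *
          ∫⁻ x in Ioc (0 : ℝ) 1,
            (‖f x‖₊ : ℝ≥0∞) ^ p * ENNReal.ofReal (x ^ (1 - p / 2)) := by
  obtain ⟨C, hC, hS⟩ := exists_lintegral_inv_two_sub_rpow_le (p := p) (α := 1 - p / 2)
    (by linarith) (by linarith) (by linarith)
  refine ⟨C ^ p⁻¹, by positivity, fun f hf _ => ?_⟩
  rw [← Real.rpow_mul hC.le, inv_mul_cancel₀ (by linarith), Real.rpow_one]
  simp only [← enorm_eq_nnnorm]
  refine le_trans (lintegral_mono_ae (ae_restrict_of_forall_mem measurableSet_Ioc fun x hx => ?_))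
    (hS _ hf.enorm)
  gcongr
  exact enorm_setIntegral_div_two_sub_le f hx.2
end
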